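/- For every propositional formula φ and every subset σ of sig(φ), there exists a uniform σ-interpolant for φ: a formula χ with φ ⊨ χ, sig(χ) ⊆ σ, and for every formula ψ, if φ ⊨ ψ and sig(ψ) ∩ sig(φ) ⊆ σ then χ ⊨ ψ. -/

import Mathlib

inductive PropForm : Type where
  | var : ℕ → PropForm
  | tru : PropForm
  | fls : PropForm
  | neg : PropForm → PropForm
  | conj : PropForm → PropForm → PropForm
  | disj : PropForm → PropForm → PropForm
deriving DecidableEq

namespace PropForm

def eval (v : ℕ → Bool) : PropForm → Bool
  | var p => v p
  | tru => true
  | fls => false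
  | neg φ => !(eval v φ)
  | conj φ ψ => eval v φ && eval v ψ
  | disj φ ψ => eval v φ || eval v ψ

def sig : PropForm → Finset ℕ
  | var p => {p}
  | tru => ∅
  | fls => ∅
  | neg φ => sig φ
  | conj φ ψ => sig φ ∪ sig ψ
  | disj φ ψ => sig φ ∪ sig ψ

def impl (φ ψ : PropForm) : PropForm := disj (neg φ) ψ

def iff (φ ψ : PropForm) : PropForm := conj (impl φ ψ) (impl ψ φ)

end PropForm

/-- Semantic entailment: every model of `φ` is a model of `ψ`. -/
def Entails (φ ψ : PropForm) : Prop :=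
  ∀ v : ℕ → Bool, φ.eval v = true → ψ.eval v = true

/-!
The uniform interpolant is obtained by existentially quantifying away the atoms of `φ` outside `σ`:
forgetting an atom `p` is the Shannon expansion `φ[⊤/p] ∨ φ[⊥/p]`, and iterating it yields a
formula over `sig φ ∩ σ` whose models are the valuations that can be changed outside `σ` into a
model of `φ`. A consequence `ψ` of `φ` that shares with `φ` only atoms of `σ` cannot tell such a
valuation from the model of `φ` it was changed into.
-/

namespace PropForm

theorem eval_congr {φ : PropForm} {v w : ℕ → Bool} (h : ∀ p ∈ φ.sig, v p = w p) :
    φ.eval v = φ.eval w := by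
  induction φ with
  | var p => exact h p (Finset.mem_singleton_self p)
  | tru | fls => rfl
  | neg φ ih => simp only [eval, ih h]
  | conj φ ψ ihφ ihψ | disj φ ψ ihφ ihψ =>
    simp only [eval]
    rw [ihφ fun p hp => h p (Finset.mem_union_left _ hp),
      ihψ fun p hp => h p (Finset.mem_union_right _ hp)]

def assign (p : ℕ) (b : Bool) : PropForm → PropForm
  | var q => if q = p then (if b then tru else fls) else var q
  | tru => tru
  | fls => fls
  | neg φ => neg (assign p b φ)
  | conj φ ψ => conj (assign p b φ) (assign p b ψ)
  | disj φ ψ => disj (assign p b φ) (assign p b ψ)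

theorem eval_assign (p : ℕ) (b : Bool) (v : ℕ → Bool) (φ : PropForm) :
    (φ.assign p b).eval v = φ.eval (Function.update v p b) := by
  induction φ with
  | var q => by_cases hq : q = p <;> cases b <;> simp [assign, eval, hq]
  | tru | fls => rfl
  | neg φ ih => simp only [assign, eval, ih]
  | conj φ ψ ihφ ihψ | disj φ ψ ihφ ihψ => simp only [assign, eval, ihφ, ihψ]

theorem sig_assign (p : ℕ) (b : Bool) (φ : PropForm) : (φ.assign p b).sig ⊆ φ.sig.erase p := by
  induction φ with
  | var q => by_cases hq : q = p <;> cases b <;> simp [assign, sig, hq]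
  | tru | fls => simp [assign, sig]
  | neg φ ih => exact ih
  | conj φ ψ ihφ ihψ | disj φ ψ ihφ ihψ =>
    simp only [assign, sig, Finset.erase_union_distrib]
    exact Finset.union_subset_union ihφ ihψ

def forget (p : ℕ) (φ : PropForm) : PropForm :=
  disj (φ.assign p true) (φ.assign p false)

theorem eval_forget (p : ℕ) (φ : PropForm) (v : ℕ → Bool) :
    (φ.forget p).eval v = true ↔ ∃ b, φ.eval (Function.update v p b) = true := by
  simp [forget, eval, eval_assign, Bool.exists_bool, or_comm]

theorem sig_forget (p : ℕ) (φ : PropForm) : (φ.forget p).sig ⊆ φ.sig.erase p :=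
  Finset.union_subset (sig_assign p true φ) (sig_assign p false φ)

def forgetAll (L : List ℕ) (φ : PropForm) : PropForm :=
  L.foldr forget φ

theorem forgetAll_cons (p : ℕ) (L : List ℕ) (φ : PropForm) :
    φ.forgetAll (p :: L) = (φ.forgetAll L).forget p :=
  rfl

theorem eval_forgetAll (L : List ℕ) (φ : PropForm) (v : ℕ → Bool) :
    (φ.forgetAll L).eval v = true ↔ ∃ w, (∀ q ∉ L, w q = v q) ∧ φ.eval w = true := by
  induction L generalizing v with
  | nil => simp only [forgetAll, List.foldr_nil, List.not_mem_nil, not_false_eq_true,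
      forall_const, ← funext_iff, exists_eq_left]
  | cons p L ih =>
    rw [forgetAll_cons, eval_forget]
    constructor
    · rintro ⟨b, hb⟩
      obtain ⟨w, hw, hφ⟩ := (ih _).1 hb
      refine ⟨w, fun q hq => ?_, hφ⟩
      rw [hw q (List.not_mem_of_not_mem_cons hq),
        Function.update_of_ne (List.ne_of_not_mem_cons hq)]
    · rintro ⟨w, hw, hφ⟩
      refine ⟨w p, (ih _).2 ⟨w, fun q hq => ?_, hφ⟩⟩
      by_cases hqp : q = p
      · subst hqp
        rw [Function.update_self]
      · rw [Function.update_of_ne hqp, hw q (by simp [hqp, hq])]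

theorem sig_forgetAll (L : List ℕ) (φ : PropForm) :
    (φ.forgetAll L).sig ⊆ φ.sig \ L.toFinset := by
  induction L with
  | nil => simp [forgetAll]
  | cons p L ih =>
    rw [forgetAll_cons, List.toFinset_cons, Finset.sdiff_insert]
    exact (sig_forget p _).trans (Finset.erase_subset_erase p ih)

end PropForm

open PropForm

theorem uniform_interpolation_general (φ : PropForm) (σ : Finset ℕ) :
    ∃ χ : PropForm, Entails φ χ ∧ χ.sig ⊆ σ ∧
      ∀ ψ : PropForm, Entails φ ψ → ψ.sig ∩ φ.sig ⊆ σ → Entails χ ψ := by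
  refine ⟨φ.forgetAll (φ.sig \ σ).toList, fun v hv => ?_, ?_, fun ψ hφψ hψ v hv => ?_⟩
  · exact (eval_forgetAll _ φ v).2 ⟨v, fun _ _ => rfl, hv⟩
  · refine (sig_forgetAll _ φ).trans ?_
    rw [Finset.toList_toFinset, Finset.sdiff_sdiff_self_left]
    exact Finset.inter_subset_right
  · obtain ⟨w, hw, hφ⟩ := (eval_forgetAll _ φ v).1 hv
    rw [← hφψ w hφ]
    refine eval_congr fun p hp => (hw p fun hpL => ?_).symm
    rw [Finset.mem_toList, Finset.mem_sdiff] at hpL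
    exact hpL.2 (hψ (Finset.mem_inter_of_mem hp hpL.1))

/-- Uniform Interpolation Property of propositional logic. -/
theorem uniform_interpolation (φ : PropForm) (σ : Finset ℕ) (hσ : σ ⊆ φ.sig) :
    ∃ χ : PropForm, Entails φ χ ∧ χ.sig ⊆ σ ∧
      ∀ ψ : PropForm, Entails φ ψ → ψ.sig ∩ φ.sig ⊆ σ → Entails χ ψ :=
  uniform_interpolation_general φ σ
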